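/- Suppose g : [0,∞) → [0,∞) is C² with g' > 0, g'' ≥ 0, and there exists η < 1/2 and a constant C, x₀ such that g''(x) ≤ C x^{−1/2} (g'(x))^{1+η} for x ≥ x₀. Then there is a constant C' such that g'(x) ≤ C' (1 + g(x))^{1/(1−η)} for all x ≥ 0. -/
import Mathlib


/-- If `g : [0,∞) → [0,∞)` is `C²` with `g' > 0`, `g'' ≥ 0`, and
`g''(x) ≤ C x^{-1/2} (g'(x))^{1+η}` for `x ≥ x₀`, where `η < 1/2`, then
`g'(x) ≲ (1 + g(x))^{1/(1-η)}` on `[0,∞)`. -/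
theorem deriv_growth_estimate (g g' g'' : ℝ → ℝ)
    (hg : ∀ x ≥ (0 : ℝ), HasDerivAt g (g' x) x)
    (hg' : ∀ x ≥ (0 : ℝ), HasDerivAt g' (g'' x) x)
    (hgpos : ∀ x ≥ (0 : ℝ), 0 ≤ g x)
    (hg'pos : ∀ x ≥ (0 : ℝ), 0 < g' x)
    (hg''nonneg : ∀ x ≥ (0 : ℝ), 0 ≤ g'' x)
    (hcont : ContinuousOn g'' (Set.Ici (0 : ℝ)))
    (η : ℝ) (hη : η < 1 / 2)
    (C x₀ : ℝ) (hC : 0 < C) (hx₀ : 0 < x₀)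
    (hbound : ∀ x ≥ x₀, g'' x ≤ C * x ^ (-(1 / 2 : ℝ)) * (g' x) ^ (1 + η)) :
    ∃ C' > (0 : ℝ), ∀ x ≥ (0 : ℝ), g' x ≤ C' * (1 + g x) ^ (1 / (1 - η)) := by
  have hη1 : (0:ℝ) < 1 - η := by linarith
  set B := (1 - η) * C with hB
  have hBpos : 0 < B := by positivity
  set x₁ : ℝ := max x₀ (B ^ 2 + 1) with hx₁def
  have hx₁0 : (0:ℝ) < x₁ := lt_of_lt_of_le hx₀ (le_max_left _ _)
  have hx₁x₀ : x₀ ≤ x₁ := le_max_left _ _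
  -- monotonicity of g' on [0, ∞)
  have hmono : MonotoneOn g' (Set.Ici (0:ℝ)) := by
    apply monotoneOn_of_deriv_nonneg (convex_Ici 0)
    · intro x hx
      exact (hg' x hx).continuousAt.continuousWithinAt
    · intro x hx
      rw [interior_Ici] at hx
      exact (hg' x (le_of_lt hx)).differentiableAt.differentiableWithinAt
    · intro x hx
      rw [interior_Ici] at hx
      rw [(hg' x hx.le).deriv]
      exact hg''nonneg x hx.le
  -- derivative of ψ = (g')^(1-η) - g
  have hderiv : ∀ x ≥ (0:ℝ), HasDerivAt (fun y => g' y ^ (1 - η) - g y)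
      (g'' x * (1 - η) * g' x ^ (1 - η - 1) - g' x) x := by
    intro x hx
    exact ((hg' x hx).rpow_const (Or.inl (ne_of_gt (hg'pos x hx)))).sub (hg x hx)
  -- ψ is antitone on [x₁, ∞)
  have hanti : AntitoneOn (fun y => g' y ^ (1 - η) - g y) (Set.Ici x₁) := by
    apply antitoneOn_of_deriv_nonpos (convex_Ici x₁)
    · intro x hx
      exact (hderiv x (le_trans hx₁0.le hx)).continuousAt.continuousWithinAt
    · intro x hx
      rw [interior_Ici] at hx
      exact (hderiv x (le_trans hx₁0.le hx.le)).differentiableAt.differentiableWithinAt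
    · intro x hx
      rw [interior_Ici] at hx
      have hx0 : (0:ℝ) ≤ x := le_trans hx₁0.le hx.le
      have hxpos : (0:ℝ) < x := lt_of_le_of_lt hx₁0.le hx
      rw [(hderiv x hx0).deriv]
      have hu : 0 < g' x := hg'pos x hx0
      -- step 1: g'' x * (1-η) * g' x ^ (-η) ≤ B * x ^ (-(1/2)) * g' x
      have h1 : g'' x * (1 - η) * g' x ^ (1 - η - 1)
          ≤ B * x ^ (-(1 / 2 : ℝ)) * g' x := by
        have hb := hbound x (le_trans hx₁x₀ hx.le)
        have hpw : (0:ℝ) ≤ (1 - η) * g' x ^ (1 - η - 1) := by positivity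
        have := mul_le_mul_of_nonneg_right hb hpw
        calc g'' x * (1 - η) * g' x ^ (1 - η - 1)
            = g'' x * ((1 - η) * g' x ^ (1 - η - 1)) := by ring
          _ ≤ C * x ^ (-(1 / 2 : ℝ)) * g' x ^ (1 + η) * ((1 - η) * g' x ^ (1 - η - 1)) := this
          _ = B * x ^ (-(1 / 2 : ℝ)) * (g' x ^ (1 + η) * g' x ^ (1 - η - 1)) := by ring
          _ = B * x ^ (-(1 / 2 : ℝ)) * g' x := by
              rw [← Real.rpow_add hu]
              norm_num
      -- step 2: B * x ^ (-(1/2)) ≤ 1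
      have h2 : B * x ^ (-(1 / 2 : ℝ)) ≤ 1 := by
        have hs : B ≤ x ^ ((1 / 2 : ℝ)) := by
          have hx1 : B ^ 2 ≤ x := le_trans (by linarith [le_max_right x₀ (B ^ 2 + 1)]) hx.le
          have h := Real.sqrt_le_sqrt hx1
          rw [Real.sqrt_sq hBpos.le] at h
          rwa [← Real.sqrt_eq_rpow]
        have hxp : (0:ℝ) < x ^ ((1 / 2 : ℝ)) := Real.rpow_pos_of_pos hxpos _
        rw [Real.rpow_neg hx0]
        rw [mul_inv_le_iff₀ hxp, one_mul]
        exact hs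
      have h3 : B * x ^ (-(1 / 2 : ℝ)) * g' x ≤ g' x := by
        have := mul_le_mul_of_nonneg_right h2 hu.le
        linarith
      linarith
  set K : ℝ := g' x₁ ^ (1 - η) with hK
  have hKpos : 0 < K := Real.rpow_pos_of_pos (hg'pos x₁ hx₁0.le) _
  set M : ℝ := max K 1 with hM
  have hM1 : (1:ℝ) ≤ M := le_max_right _ _
  set e : ℝ := 1 / (1 - η) with he
  have hepos : 0 < e := by positivity
  refine ⟨max (g' x₁) (M ^ e), lt_max_of_lt_left (hg'pos x₁ hx₁0.le), ?_⟩
  intro x hx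
  have hgx : 0 ≤ g x := hgpos x hx
  have hone : (1:ℝ) ≤ (1 + g x) ^ e :=
    Real.one_le_rpow (by linarith) hepos.le
  rcases le_total x x₁ with hcase | hcase
  · -- small x : use monotonicity of g'
    have h4 : g' x ≤ g' x₁ := hmono hx hx₁0.le hcase
    calc g' x ≤ g' x₁ := h4
      _ = g' x₁ * 1 := by ring
      _ ≤ max (g' x₁) (M ^ e) * (1 + g x) ^ e := by
          apply mul_le_mul (le_max_left _ _) hone zero_le_one
          exact le_trans (hg'pos x₁ hx₁0.le).le (le_max_left _ _)
  · -- large x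
    have hx0' : (0:ℝ) ≤ x := hx
    have hu : 0 < g' x := hg'pos x hx0'
    have h5 : g' x ^ (1 - η) - g x ≤ K - g x₁ :=
      hanti (Set.self_mem_Ici) hcase hcase
    have h6 : g' x ^ (1 - η) ≤ K + g x := by
      have := hgpos x₁ hx₁0.le
      linarith
    have h7 : K + g x ≤ M * (1 + g x) := by
      have hKM : K ≤ M := le_max_left _ _
      nlinarith
    have h8 : g' x ^ (1 - η) ≤ M * (1 + g x) := le_trans h6 h7
    have h9 : (g' x ^ (1 - η)) ^ e ≤ (M * (1 + g x)) ^ e :=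
      Real.rpow_le_rpow (Real.rpow_nonneg hu.le _) h8 hepos.le
    have h10 : (g' x ^ (1 - η)) ^ e = g' x := by
      rw [← Real.rpow_mul hu.le]
      rw [mul_one_div_cancel (ne_of_gt hη1), Real.rpow_one]
    have h11 : (M * (1 + g x)) ^ e = M ^ e * (1 + g x) ^ e :=
      Real.mul_rpow (by linarith) (by linarith)
    rw [h10, h11] at h9
    calc g' x ≤ M ^ e * (1 + g x) ^ e := h9
      _ ≤ max (g' x₁) (M ^ e) * (1 + g x) ^ e := by
          apply mul_le_mul_of_nonneg_right (le_max_right _ _) (by positivity)
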